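/- Let A ⊆ Hom_K(F, K̄) and let E ⊆ K̄ be a finite extension of K such that Gal(K̄/E) stabilizes A setwise (so e_{ζ,A}(T) ∈ O_E[T] for every ζ ∈ O_F). If ζ₁, ζ₂ ∈ O_F generate the same O_K-subalgebra of O_F, i.e. O_K[ζ₁] = O_K[ζ₂], then the elements e_{ζ₁,A}(ζ₁⊗1) and e_{ζ₂,A}(ζ₂⊗1) of O_F ⊗_{O_K} O_E differ by a unit: there exists u ∈ (O_F ⊗_{O_K} O_E)^× with e_{ζ₂,A}(ζ₂⊗1) = u · e_{ζ₁,A}(ζ₁⊗1). (Here e_{ζ,A}(ζ⊗1) denotes the evaluation of the polynomial e_{ζ,A}(T) ∈ O_E[T] at ζ⊗1 ∈ O_F ⊗_{O_K} O_E.) -/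

import Mathlib

/-!
If `ζ₂ = P(ζ₁)` with `P ∈ O_K[T]`, every root `φ(ζ₁)` of `e_{ζ₁,A}` is a root of `e_{ζ₂,A} ∘ P`,
so the monic `e_{ζ₁,A}` divides `e_{ζ₂,A} ∘ P` in `K̄[T]`, hence in `O_E[T]`; evaluating at
`ζ₁ ⊗ 1` gives `e_{ζ₁,A}(ζ₁ ⊗ 1) ∣ e_{ζ₂,A}(ζ₂ ⊗ 1)`, and symmetrically. The ring
`O_F ⊗_{O_K} O_E` is finite over the local ring `ℤ_p`, hence semilocal, and in a semilocal ring
elements dividing each other differ by a unit: if `b = x a` and `a = y b`, then `x + t (1 - x y)`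
is a unit for a suitable `t` (Chinese remainder theorem), and it still sends `a` to `b`.
-/

open scoped TensorProduct Polynomial

set_option synthInstance.maxHeartbeats 400000
set_option maxHeartbeats 1000000

noncomputable section

variable (p : ℕ) [Fact p.Prime]

/-- The ring of integers of a `p`-adic field `L`: the integral closure of `ℤₚ` in `L`. -/
def RInt (L : Type) [Field L] [Algebra ℤ_[p] L] : Type := ↥(integralClosure ℤ_[p] L)

local instance instCR (L : Type) [Field L] [Algebra ℤ_[p] L] : CommRing (RInt p L) :=
  inferInstanceAs (CommRing ↥(integralClosure ℤ_[p] L))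

local instance instAlgL (L : Type) [Field L] [Algebra ℤ_[p] L] : Algebra (RInt p L) L :=
  inferInstanceAs (Algebra ↥(integralClosure ℤ_[p] L) L)

/-- Functoriality of rings of integers. -/
def RIntMap (L L' : Type) [Field L] [Field L'] [Algebra ℤ_[p] L] [Algebra ℤ_[p] L']
    (f : L →ₐ[ℤ_[p]] L') : RInt p L →+* RInt p L' :=
  show ↥(integralClosure ℤ_[p] L) →+* ↥(integralClosure ℤ_[p] L') from
  { toFun := fun x => ⟨f x, IsIntegral.map f x.2⟩
    map_one' := by ext; simp
    map_mul' := fun x y => by ext; simp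
    map_zero' := by ext; simp
    map_add' := fun x y => by ext; simp }

section Galois

variable (K F : Type) [Field K] [Field F] [Algebra K F]

/-- The stabilizer of a finite set of embeddings `F →ₐ[K] K̄` inside `Gal(K̄/K)`:
the set of `σ` with `σ ∘ S = S`. -/
def galStab (S : Finset (F →ₐ[K] AlgebraicClosure K)) :
    Subgroup (AlgebraicClosure K ≃ₐ[K] AlgebraicClosure K) := by
  letI := Classical.decEq (F →ₐ[K] AlgebraicClosure K)
  exact
  { carrier := {σ | S.image (fun φ =>
        ((σ : AlgebraicClosure K →ₐ[K] AlgebraicClosure K)).comp φ) = S}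
    one_mem' := by
      have h : (fun φ : F →ₐ[K] AlgebraicClosure K =>
          (((1 : AlgebraicClosure K ≃ₐ[K] AlgebraicClosure K) :
            AlgebraicClosure K →ₐ[K] AlgebraicClosure K)).comp φ) = id := by
        funext φ; exact AlgHom.ext fun x => rfl
      simp only [Set.mem_setOf_eq, h, Finset.image_id]
    mul_mem' := by
      intro σ τ hσ hτ
      simp only [Set.mem_setOf_eq] at hσ hτ ⊢
      have h : (fun φ : F →ₐ[K] AlgebraicClosure K =>
          (((σ * τ : AlgebraicClosure K ≃ₐ[K] AlgebraicClosure K) :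
            AlgebraicClosure K →ₐ[K] AlgebraicClosure K)).comp φ)
          = (fun φ => ((σ : AlgebraicClosure K →ₐ[K] AlgebraicClosure K)).comp φ) ∘
            (fun φ => ((τ : AlgebraicClosure K →ₐ[K] AlgebraicClosure K)).comp φ) := by
        funext φ; exact AlgHom.ext fun x => rfl
      rw [h, ← Finset.image_image, hτ, hσ]
    inv_mem' := by
      intro σ hσ
      simp only [Set.mem_setOf_eq] at hσ ⊢
      conv_lhs => rw [← hσ]
      rw [Finset.image_image]
      have h : ((fun φ : F →ₐ[K] AlgebraicClosure K =>
          (((σ⁻¹ : AlgebraicClosure K ≃ₐ[K] AlgebraicClosure K) :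
            AlgebraicClosure K →ₐ[K] AlgebraicClosure K)).comp φ) ∘
          (fun φ => ((σ : AlgebraicClosure K →ₐ[K] AlgebraicClosure K)).comp φ)) = id := by
        funext φ
        exact AlgHom.ext fun x => σ.symm_apply_apply (φ x)
      rw [h, Finset.image_id] }

/-- The reflex field `E_S ⊆ K̄` of a set `S` of embeddings `F →ₐ[K] K̄`: the fixed field
of its stabilizer in `Gal(K̄/K)`. -/
def reflexField (S : Finset (F →ₐ[K] AlgebraicClosure K)) :
    IntermediateField K (AlgebraicClosure K) :=
  IntermediateField.fixedField (galStab K F S)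

end Galois

section Eis

/- `K` is a finite extension of `ℚₚ` (with its induced `ℤₚ`-algebra structure), `F` is a
finite extension of `K`, and `E` is a further finite extension of `K` equipped with a
`K`-embedding `ιE : E → K̄` realizing it as a subfield of an algebraic closure of `K`. -/
variable (K : Type) [Field K] [Algebra ℚ_[p] K] [FiniteDimensional ℚ_[p] K]
  [Algebra ℤ_[p] K] [IsScalarTower ℤ_[p] ℚ_[p] K]
variable (F : Type) [Field F] [Algebra K F] [FiniteDimensional K F]
  [Algebra ℤ_[p] F] [IsScalarTower ℤ_[p] K F]
variable (E : Type) [Field E] [Algebra K E] [Algebra ℤ_[p] E] [IsScalarTower ℤ_[p] K E]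

local instance algOKOF : Algebra (RInt p K) (RInt p F) :=
  (RIntMap p K F (IsScalarTower.toAlgHom ℤ_[p] K F)).toAlgebra

local instance algOKOE : Algebra (RInt p K) (RInt p E) :=
  (RIntMap p K E (IsScalarTower.toAlgHom ℤ_[p] K E)).toAlgebra

variable (ιE : E →ₐ[K] AlgebraicClosure K)

/-- The canonical map `O_E → K̄` induced by `ιE : E → K̄`. -/
def OEtoKb : RInt p E →+* AlgebraicClosure K :=
  (ιE : E →+* AlgebraicClosure K).comp (algebraMap (RInt p E) E)

/-- `Q ∈ O_E[T]` represents the Eisenstein polynomial `e_{ζ,S}(T) = ∏_{φ ∈ S} (T - φ(ζ))`. -/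
def IsEisPoly (S : Finset (F →ₐ[K] AlgebraicClosure K)) (ζ : RInt p F)
    (Q : Polynomial (RInt p E)) : Prop :=
  Q.map (OEtoKb p K E ιE) =
    ∏ φ ∈ S, (Polynomial.X - Polynomial.C (φ (algebraMap (RInt p F) F ζ)))

variable (R : Type) [CommRing R] [Algebra (RInt p K) R] [Algebra (RInt p E) R]

/-- The element `e_S = e_{ζ,S}(ζ ⊗ 1)` of `O_F ⊗_{O_K} R`, where `Q ∈ O_E[T]`
represents the Eisenstein polynomial `e_{ζ,S}(T)`. -/
def eElt (Q : Polynomial (RInt p E)) (ζ : RInt p F) : (RInt p F) ⊗[RInt p K] R :=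
  Polynomial.eval₂
    ((Algebra.TensorProduct.includeRight :
        R →ₐ[RInt p K] (RInt p F) ⊗[RInt p K] R).toRingHom.comp (algebraMap (RInt p E) R))
    (ζ ⊗ₜ[RInt p K] (1 : R)) Q

/-- The Eisenstein ideal `J_{S,R} ⊆ O_F ⊗_{O_K} R`, generated by `e_S`. -/
def JIdeal (Q : Polynomial (RInt p E)) (ζ : RInt p F) :
    Ideal ((RInt p F) ⊗[RInt p K] R) :=
  Ideal.span {eElt p K F E R Q ζ}

local instance algOKKb : Algebra (RInt p K) (AlgebraicClosure K) :=
  ((algebraMap K (AlgebraicClosure K)).comp (algebraMap (RInt p K) K)).toAlgebra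

/-- The restriction of an embedding `φ : F →ₐ[K] K̄` to the ring of integers, as an
`O_K`-algebra homomorphism `O_F →ₐ[O_K] K̄`. -/
def embToKb (φ : F →ₐ[K] AlgebraicClosure K) : RInt p F →ₐ[RInt p K] AlgebraicClosure K where
  toRingHom := (φ : F →+* AlgebraicClosure K).comp (algebraMap (RInt p F) F)
  commutes' := fun r => by
    have h1 : (algebraMap (RInt p F) F) ((algebraMap (RInt p K) (RInt p F)) r)
        = algebraMap K F ((algebraMap (RInt p K) K) r) := by
      show algebraMap K F ((IsScalarTower.toAlgHom ℤ_[p] K K) ((algebraMap (RInt p K) K) r)) = _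
      rfl
    show φ ((algebraMap (RInt p F) F) ((algebraMap (RInt p K) (RInt p F)) r)) = _
    rw [h1, φ.commutes]
    rfl

/-- The inclusion `O_E → K̄` as an `O_K`-algebra homomorphism. -/
def oEToKb : RInt p E →ₐ[RInt p K] AlgebraicClosure K where
  toRingHom := OEtoKb p K E ιE
  commutes' := fun r => by
    have h1 : (algebraMap (RInt p E) E) ((algebraMap (RInt p K) (RInt p E)) r)
        = algebraMap K E ((algebraMap (RInt p K) K) r) := by
      show algebraMap K E ((IsScalarTower.toAlgHom ℤ_[p] K K) ((algebraMap (RInt p K) K) r)) = _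
      rfl
    show ιE ((algebraMap (RInt p E) E) ((algebraMap (RInt p K) (RInt p E)) r)) = _
    rw [h1, ιE.commutes]
    rfl

/-- The map `O_F ⊗_{O_K} O_E → K̄` whose value on `a ⊗ e` is `φ(a)·e`. -/
def phiComponent (φ : F →ₐ[K] AlgebraicClosure K) :
    (RInt p F) ⊗[RInt p K] (RInt p E) →ₐ[RInt p K] AlgebraicClosure K :=
  Algebra.TensorProduct.productMap (embToKb p K F φ) (oEToKb p K E ιE)


end Eis

open Polynomial

theorem exists_isUnit_add_mul_of_isCoprime {S : Type*} [CommRing S] [Finite (MaximalSpectrum S)]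
    {x z : S} (h : IsCoprime x z) : ∃ t : S, IsUnit (x + t * z) := by
  classical
  -- `t ≡ 1` at the maximal ideals containing `x`, `t ≡ 0` at the others.
  obtain ⟨t, ht⟩ := Ideal.exists_forall_sub_mem_ideal (I := MaximalSpectrum.asIdeal)
    (fun _ _ => MaximalSpectrum.isCoprime_of_ne) (fun m => if x ∈ m.asIdeal then 1 else 0)
  refine ⟨t, by_contra fun hu => ?_⟩
  obtain ⟨m, hm, hmem⟩ := exists_max_ideal_of_mem_nonunits hu
  obtain ⟨a, b, hab⟩ := h
  have htm := ht ⟨m, hm⟩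
  by_cases hx : x ∈ m
  · simp only [hx, if_true] at htm
    have hz : z ∈ m := by
      have := m.sub_mem (m.sub_mem hmem hx) (m.mul_mem_right z htm)
      rwa [show x + t * z - x - (t - 1) * z = z by ring] at this
    exact hm.ne_top (m.eq_top_of_isUnit_mem
      (hab ▸ m.add_mem (m.mul_mem_left a hx) (m.mul_mem_left b hz)) isUnit_one)
  · simp only [hx, if_false, sub_zero] at htm
    exact hx (by simpa using m.sub_mem hmem (m.mul_mem_right z htm))

theorem exists_unit_mul_eq_of_dvd_of_dvd {S : Type*} [CommRing S] [Finite (MaximalSpectrum S)]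
    {a b : S} (hab : a ∣ b) (hba : b ∣ a) : ∃ u : Sˣ, b = u * a := by
  obtain ⟨x, rfl⟩ := hab
  obtain ⟨y, hy⟩ := hba
  obtain ⟨t, u, hu⟩ := exists_isUnit_add_mul_of_isCoprime (x := x) (z := 1 - x * y)
    ⟨y, 1, by ring⟩
  exact ⟨u, by rw [hu]; linear_combination (-t) * hy⟩

theorem finite_maximalSpectrum_of_moduleFinite (S T : Type*) [CommRing S] [CommRing T]
    [Algebra S T] [Finite (MaximalSpectrum S)] [Module.Finite S T] :
    Finite (MaximalSpectrum T) := by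
  -- a maximal ideal of `T` lies over a maximal ideal of `S`, and each fibre is finite
  have hfin : {P : Ideal T | P.IsMaximal}.Finite := by
    refine ((Set.finite_range MaximalSpectrum.asIdeal).biUnion fun m _ =>
      Algebra.QuasiFinite.finite_primesOver (R := S) (S := T) m).subset fun P hP => ?_
    have : P.IsMaximal := hP
    exact Set.mem_biUnion (Set.mem_range_self
      ⟨P.under S, Ideal.isMaximal_comap_of_isIntegral_of_isMaximal P⟩) ⟨hP.isPrime, ⟨rfl⟩⟩
  have := hfin.to_subtype
  exact .of_injective
    (fun m : MaximalSpectrum T => (⟨m.asIdeal, m.isMaximal⟩ : {P : Ideal T | P.IsMaximal}))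
    fun m m' h => MaximalSpectrum.ext (congrArg Subtype.val h)

theorem Polynomial.dvd_comp_of_map_eq_prod {B Ω σ : Type*} [CommRing B] [CommRing Ω]
    {f : B →+* Ω} (hf : Function.Injective f) (s : Finset σ) (x : σ → Ω) {Q Q' P : B[X]}
    (hQ : Q.map f = ∏ i ∈ s, (X - C (x i)))
    (hQ' : Q'.map f = ∏ i ∈ s, (X - C ((P.map f).eval (x i)))) :
    Q ∣ Q'.comp P := by
  have hmonic : Q.Monic :=
    monic_of_injective hf (hQ ▸ monic_prod_of_monic _ _ fun _ _ => monic_X_sub_C _)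
  rw [← map_dvd_map f hf hmonic, map_comp, hQ, hQ', prod_comp]
  exact Finset.prod_dvd_prod_of_dvd _ _ fun i _ => by
    simpa only [sub_comp, X_comp, C_comp] using X_sub_C_dvd_sub_C_eval

local instance instAlgPadicInt (L : Type) [Field L] [Algebra ℤ_[p] L] :
    Algebra ℤ_[p] (RInt p L) :=
  inferInstanceAs (Algebra ℤ_[p] ↥(integralClosure ℤ_[p] L))

theorem RIntMap.isScalarTower (L L' : Type) [Field L] [Field L'] [Algebra ℤ_[p] L]
    [Algebra ℤ_[p] L'] (f : L →ₐ[ℤ_[p]] L') :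
    letI := (RIntMap p L L' f).toAlgebra
    IsScalarTower ℤ_[p] (RInt p L) (RInt p L') :=
  let := (RIntMap p L L' f).toAlgebra
  .of_algebraMap_eq fun c => Subtype.ext (f.commutes c).symm

section Padic

variable {K : Type} [Field K] [Algebra ℤ_[p] K]
  {F : Type} [Field F] [Algebra K F] [Algebra ℤ_[p] F] [IsScalarTower ℤ_[p] K F]
  {E : Type} [Field E] [Algebra K E] [Algebra ℤ_[p] E] [IsScalarTower ℤ_[p] K E]

attribute [local instance] algOKOF algOKOE algOKKb

theorem RInt.finite [Algebra ℚ_[p] K] [FiniteDimensional ℚ_[p] K] [IsScalarTower ℤ_[p] ℚ_[p] K]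
    (L : Type) [Field L] [Algebra K L] [FiniteDimensional K L] [Algebra ℤ_[p] L]
    [IsScalarTower ℤ_[p] K L] : Module.Finite ℤ_[p] (RInt p L) := by
  let : Algebra ℚ_[p] L := ((algebraMap K L).comp (algebraMap ℚ_[p] K)).toAlgebra
  have : IsScalarTower ℚ_[p] K L := .of_algebraMap_eq fun _ => rfl
  have : IsScalarTower ℤ_[p] ℚ_[p] L := .of_algebraMap_eq fun c => by
    rw [IsScalarTower.algebraMap_apply ℤ_[p] K L, IsScalarTower.algebraMap_apply ℤ_[p] ℚ_[p] K]
    rfl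
  have : FiniteDimensional ℚ_[p] L := Module.Finite.trans K L
  exact IsIntegralClosure.finite ℤ_[p] ℚ_[p] L (integralClosure ℤ_[p] L)

theorem finite_maximalSpectrum_tensor [Algebra ℚ_[p] K] [FiniteDimensional ℚ_[p] K]
    [IsScalarTower ℤ_[p] ℚ_[p] K] [FiniteDimensional K F] [FiniteDimensional K E] :
    Finite (MaximalSpectrum (RInt p F ⊗[RInt p K] RInt p E)) := by
  have := RInt.finite p (K := K) K
  have := RInt.finite p (K := K) F
  have := RInt.finite p (K := K) E
  have := RIntMap.isScalarTower p K F (IsScalarTower.toAlgHom ℤ_[p] K F)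
  have := RIntMap.isScalarTower p K E (IsScalarTower.toAlgHom ℤ_[p] K E)
  have : Module.Finite (RInt p K) (RInt p F) := .of_restrictScalars_finite ℤ_[p] _ _
  have : Module.Finite (RInt p K) (RInt p E) := .of_restrictScalars_finite ℤ_[p] _ _
  have := finite_maximalSpectrum_of_moduleFinite ℤ_[p] (RInt p K)
  exact finite_maximalSpectrum_of_moduleFinite (RInt p K) _

variable {R : Type} [CommRing R] [Algebra (RInt p K) R] [Algebra (RInt p E) R]

theorem eElt_aeval [IsScalarTower (RInt p K) (RInt p E) R] (Q : (RInt p E)[X])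
    (P : (RInt p K)[X]) (ζ : RInt p F) :
    eElt p K F E R Q (aeval ζ P)
      = eElt p K F E R (Q.comp (P.map (algebraMap (RInt p K) (RInt p E)))) ζ := by
  have hbase : (Algebra.TensorProduct.includeRight.toRingHom.comp
      (algebraMap (RInt p E) R)).comp (algebraMap (RInt p K) (RInt p E))
      = algebraMap (RInt p K) (RInt p F ⊗[RInt p K] R) := by
    ext c
    simp [← IsScalarTower.algebraMap_apply]
  have hζ : eval₂ (Algebra.TensorProduct.includeRight.toRingHom.comp (algebraMap (RInt p E) R))
      (ζ ⊗ₜ[RInt p K] (1 : R)) (P.map (algebraMap (RInt p K) (RInt p E)))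
      = aeval ζ P ⊗ₜ[RInt p K] (1 : R) := by
    rw [eval₂_map, hbase, ← aeval_def]
    exact aeval_algHom_apply Algebra.TensorProduct.includeLeft ζ P
  rw [eElt, eElt, eval₂_comp, hζ]

theorem eElt_dvd_eElt_of_mem_adjoin {ιE : E →ₐ[K] AlgebraicClosure K}
    {S : Finset (F →ₐ[K] AlgebraicClosure K)} {ζ ξ : RInt p F} {Q Q' : (RInt p E)[X]}
    (hQ : IsEisPoly p K F E ιE S ζ Q) (hQ' : IsEisPoly p K F E ιE S ξ Q')
    (hξ : ξ ∈ Algebra.adjoin (RInt p K) {ζ}) :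
    eElt p K F E (RInt p E) Q ζ ∣ eElt p K F E (RInt p E) Q' ξ := by
  rw [Algebra.adjoin_singleton_eq_range_aeval, AlgHom.mem_range] at hξ
  obtain ⟨P, rfl⟩ := hξ
  have hinj : Function.Injective (OEtoKb p K E ιE) := fun _ _ h => Subtype.ext (ιE.injective h)
  rw [eElt_aeval]
  refine map_dvd (eval₂RingHom _ _) (dvd_comp_of_map_eq_prod hinj S _ hQ (hQ'.trans ?_))
  refine Finset.prod_congr rfl fun φ _ => ?_
  -- `φ` is an `O_K`-algebra map on `O_F`, so it commutes with `P`
  have hcomp : (OEtoKb p K E ιE).comp (algebraMap (RInt p K) (RInt p E))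
      = algebraMap (RInt p K) (AlgebraicClosure K) := (oEToKb p K E ιE).comp_algebraMap
  rw [map_map, hcomp, eval_map, ← aeval_def]
  exact congrArg (fun y => X - C y) (aeval_algHom_apply (embToKb p K F φ) ζ P).symm

end Padic

section Eis

variable (K : Type) [Field K] [Algebra ℚ_[p] K] [FiniteDimensional ℚ_[p] K]
  [Algebra ℤ_[p] K] [IsScalarTower ℤ_[p] ℚ_[p] K]
variable (F : Type) [Field F] [Algebra K F] [FiniteDimensional K F]
  [Algebra ℤ_[p] F] [IsScalarTower ℤ_[p] K F]
variable (E : Type) [Field E] [Algebra K E] [Algebra ℤ_[p] E] [IsScalarTower ℤ_[p] K E]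
variable (ιE : E →ₐ[K] AlgebraicClosure K)

attribute [local instance] algOKOF algOKOE

theorem statement0 [FiniteDimensional K E]
    (A : Finset (F →ₐ[K] AlgebraicClosure K))
    (ζ₁ ζ₂ : RInt p F)
    (hgen : Algebra.adjoin (RInt p K) {ζ₁} = Algebra.adjoin (RInt p K) {ζ₂})
    (Q₁ Q₂ : Polynomial (RInt p E))
    (hQ₁ : IsEisPoly p K F E ιE A ζ₁ Q₁) (hQ₂ : IsEisPoly p K F E ιE A ζ₂ Q₂) :
    ∃ u : ((RInt p F) ⊗[RInt p K] (RInt p E))ˣ,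
      eElt p K F E (RInt p E) Q₂ ζ₂ = (u : (RInt p F) ⊗[RInt p K] (RInt p E)) *
        eElt p K F E (RInt p E) Q₁ ζ₁ := by
  have := finite_maximalSpectrum_tensor p (K := K) (F := F) (E := E)
  exact exists_unit_mul_eq_of_dvd_of_dvd
    (eElt_dvd_eElt_of_mem_adjoin p hQ₁ hQ₂ (hgen ▸ Algebra.self_mem_adjoin_singleton _ ζ₂))
    (eElt_dvd_eElt_of_mem_adjoin p hQ₂ hQ₁ (hgen ▸ Algebra.self_mem_adjoin_singleton _ ζ₁))

end Eis

end
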